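/- For x of order 4 in G = A(n,θ) with M_x = [x,G], the image of x in G/M_x has order 4; in particular x² ∉ [x,G]. -/
import Mathlib


noncomputable section

abbrev Fq (n : ℕ) : Type := GaloisField 2 n

instance (n : ℕ) : Fintype (Fq n) := Fintype.ofFinite _

@[ext] structure SuzukiA (n : ℕ) (θ : Fq n ≃+* Fq n) where
  a : Fq n
  b : Fq n

namespace SuzukiA

variable {n : ℕ} {θ : Fq n ≃+* Fq n}

instance : Mul (SuzukiA n θ) := ⟨fun x y => ⟨x.a + y.a, x.b + y.b + x.a * θ y.a⟩⟩
instance : One (SuzukiA n θ) := ⟨⟨0, 0⟩⟩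
instance : Inv (SuzukiA n θ) := ⟨fun x => ⟨x.a, x.b + x.a * θ x.a⟩⟩

theorem mul_def (x y : SuzukiA n θ) :
    x * y = ⟨x.a + y.a, x.b + y.b + x.a * θ y.a⟩ := rfl

@[simp] theorem one_a : (1 : SuzukiA n θ).a = 0 := rfl
@[simp] theorem one_b : (1 : SuzukiA n θ).b = 0 := rfl

instance : Group (SuzukiA n θ) where
  mul_assoc x y z := by ext <;> simp [mul_def, map_add] <;> ring
  one_mul x := by ext <;> simp [mul_def]
  mul_one x := by ext <;> simp [mul_def]
  inv_mul_cancel x := by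
    have h2 : (2 : Fq n) = 0 := by
      have := CharP.cast_eq_zero (Fq n) 2
      exact_mod_cast this
    show (⟨x.a, x.b + x.a * θ x.a⟩ * x : SuzukiA n θ) = 1
    ext
    · show x.a + x.a = 0
      linear_combination x.a * h2
    · show x.b + x.a * θ x.a + x.b + x.a * θ x.a = 0
      linear_combination (x.b + x.a * θ x.a) * h2

instance : Fintype (SuzukiA n θ) :=
  Fintype.ofEquiv (Fq n × Fq n)
    { toFun := fun p => ⟨p.1, p.2⟩
      invFun := fun x => (x.a, x.b)
      left_inv := fun _ => rfl
      right_inv := fun _ => rfl }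

end SuzukiA


namespace SuzukiAProof

open Finset

variable {n : ℕ} {θ : Fq n ≃+* Fq n}

lemma two_eq_zero (n : ℕ) : (2 : Fq n) = 0 := by
  exact_mod_cast CharP.cast_eq_zero (Fq n) 2

lemma key_trace (n : ℕ) (hn : 1 < n) (hodd : Odd n) (θ : Fq n ≃+* Fq n) (u : Fq n) :
    u + θ u ≠ 1 := by
  intro h
  haveI : Fact (Nat.Prime 2) := ⟨Nat.prime_two⟩
  have h2 : (2 : Fq n) = 0 := two_eq_zero n
  set T : Fq n → Fq n := fun v => ∑ j ∈ Finset.range n, v ^ 2 ^ j with hT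
  have hpow : ∀ v : Fq n, v ^ 2 ^ n = v := by
    intro v
    have hc : Fintype.card (Fq n) = 2 ^ n := by
      rw [Fintype.card_eq_nat_card, GaloisField.card (p := 2) (n := n) (by omega)]
    rw [← hc]; exact FiniteField.pow_card v
  have hsq : ∀ v : Fq n, T v ^ 2 = T v := by
    intro v
    have h1 : T v ^ 2 = ∑ j ∈ Finset.range n, (fun j => v ^ 2 ^ j) (j + 1) := by
      rw [hT]
      rw [sum_pow_char]
      apply Finset.sum_congr rfl
      intro j _
      rw [← pow_mul, ← pow_succ]
    have h3 : (∑ j ∈ Finset.range n, (fun j => v ^ 2 ^ j) (j + 1)) + v ^ 2 ^ 0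
        = (∑ j ∈ Finset.range n, v ^ 2 ^ j) + v ^ 2 ^ n := by
      rw [← Finset.sum_range_succ' (fun j => v ^ 2 ^ j) n, Finset.sum_range_succ]
    rw [hpow, pow_zero, pow_one] at h3
    have := add_right_cancel h3
    rw [h1, this]
  have hTF : ∀ v : Fq n, T v = 0 ∨ T v = 1 := by
    intro v
    have hz : T v * (T v - 1) = 0 := by linear_combination hsq v
    rcases mul_eq_zero.mp hz with h' | h'
    · exact Or.inl h'
    · exact Or.inr (by linear_combination h')
  have hθT : ∀ v : Fq n, T (θ v) = θ (T v) := by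
    intro v
    rw [hT]
    simp only [map_sum, map_pow]
  have hadd : ∀ v w : Fq n, T (v + w) = T v + T w := by
    intro v w
    rw [hT]
    simp only [← Finset.sum_add_distrib]
    apply Finset.sum_congr rfl
    intro j _
    apply add_pow_char_pow
  have hT1 : T 1 = 1 := by
    obtain ⟨m, hm⟩ := hodd
    rw [hT]
    simp only [one_pow, Finset.sum_const, Finset.card_range, nsmul_eq_mul, mul_one, hm]
    push_cast
    linear_combination (m : Fq n) * h2
  have hfix : θ (T u) = T u := by
    rcases hTF u with h' | h' <;> rw [h'] <;> simp
  have : T u + T u = 1 := by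
    calc T u + T u = T u + θ (T u) := by rw [hfix]
    _ = T u + T (θ u) := by rw [hθT]
    _ = T (u + θ u) := (hadd u (θ u)).symm
    _ = T 1 := by rw [h]
    _ = 1 := hT1
  have hzero : T u + T u = 0 := by linear_combination (T u) * h2
  rw [hzero] at this
  exact one_ne_zero this.symm

lemma inv_def (x : SuzukiA n θ) : x⁻¹ = ⟨x.a, x.b + x.a * θ x.a⟩ := rfl

lemma mul_def' (x y : SuzukiA n θ) :
    x * y = ⟨x.a + y.a, x.b + y.b + x.a * θ y.a⟩ := rfl

lemma comm_eq (x g : SuzukiA n θ) :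
    x⁻¹ * g⁻¹ * x * g = (⟨0, x.a * θ g.a + g.a * θ x.a⟩ : SuzukiA n θ) := by
  have h2 : (2 : Fq n) = 0 := two_eq_zero n
  ext
  · simp only [inv_def, mul_def']
    linear_combination (x.a + g.a) * h2
  · simp only [inv_def, mul_def']
    linear_combination (x.b + x.a * θ x.a + g.b + g.a * θ g.a + x.a * θ g.a) * h2

lemma sq_eq (x : SuzukiA n θ) : x ^ 2 = (⟨0, x.a * θ x.a⟩ : SuzukiA n θ) := by
  have h2 : (2 : Fq n) = 0 := two_eq_zero n
  rw [pow_two]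
  ext
  · show x.a + x.a = 0
    linear_combination x.a * h2
  · show x.b + x.b + x.a * θ x.a = x.a * θ x.a
    linear_combination x.b * h2

/-- The subgroup containing all commutators with x. -/
def H (x : SuzukiA n θ) : Subgroup (SuzukiA n θ) where
  carrier := {z | ∃ c, z = (⟨0, x.a * θ c + c * θ x.a⟩ : SuzukiA n θ)}
  one_mem' := ⟨0, by ext <;> simp⟩
  mul_mem' := by
    rintro _ _ ⟨c, rfl⟩ ⟨c', rfl⟩
    refine ⟨c + c', ?_⟩
    ext
    · show (0 : Fq n) + 0 = 0; ring
    · show x.a * θ c + c * θ x.a + (x.a * θ c' + c' * θ x.a) + 0 * θ (0 : Fq n)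
        = x.a * θ (c + c') + (c + c') * θ x.a
      rw [map_add]
      ring
  inv_mem' := by
    rintro _ ⟨c, rfl⟩
    refine ⟨c, ?_⟩
    ext
    · rfl
    · show x.a * θ c + c * θ x.a + 0 * θ (0 : Fq n) = x.a * θ c + c * θ x.a
      ring

end SuzukiAProof

open SuzukiAProof in
open SuzukiA in
theorem stmt13 (n : ℕ) (hn : 1 < n) (hodd : Odd n) (θ : Fq n ≃+* Fq n)
    (hθ : ∀ σ : Fq n ≃+* Fq n, σ ∈ Subgroup.zpowers θ)
    (x : SuzukiA n θ) (hx : orderOf x = 4) :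
    x ^ 2 ∉ Subgroup.closure {z : SuzukiA n θ | ∃ g, z = x⁻¹ * g⁻¹ * x * g} ∧
    ∀ (N : Subgroup (SuzukiA n θ)) [N.Normal],
      (N : Set (SuzukiA n θ)) = {z : SuzukiA n θ | ∃ g, z = x⁻¹ * g⁻¹ * x * g} →
      orderOf (QuotientGroup.mk x : SuzukiA n θ ⧸ N) = 4 := by
  haveI : Fact (Nat.Prime 2) := ⟨Nat.prime_two⟩
  have hn0 : (1:ℕ) < n := hn
  -- a ≠ 0
  have hx2ne : x ^ 2 ≠ 1 := by
    intro h
    have : orderOf x ∣ 2 := orderOf_dvd_of_pow_eq_one h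
    rw [hx] at this
    omega
  have ha : x.a ≠ 0 := by
    intro h0
    apply hx2ne
    rw [sq_eq, h0]
    ext <;> simp
  -- x² not in H x
  have hx2H : x ^ 2 ∉ H x := by
    rintro ⟨c, hc⟩
    rw [sq_eq] at hc
    have hb : x.a * θ x.a = x.a * θ c + c * θ x.a := congrArg SuzukiA.b hc
    have hθa : θ x.a ≠ 0 := by
      intro h'
      exact ha (θ.injective (by rw [h', map_zero]))
    apply key_trace n hn hodd θ (c * x.a⁻¹)
    rw [map_mul, map_inv₀]
    have h2 : (2 : Fq n) = 0 := two_eq_zero n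
    field_simp
    linear_combination hb + (c * θ x.a - θ x.a * x.a + θ c * x.a) * h2
  have hsub : {z : SuzukiA n θ | ∃ g, z = x⁻¹ * g⁻¹ * x * g} ⊆ (H x : Set (SuzukiA n θ)) := by
    rintro _ ⟨g, rfl⟩
    rw [comm_eq]
    exact ⟨g.a, rfl⟩
  constructor
  · intro hmem
    exact hx2H ((Subgroup.closure_le (H x)).mpr hsub hmem)
  · intro N _ hN
    have hx4 : x ^ 4 = 1 := by rw [← hx]; exact pow_orderOf_eq_one x
    have hy4 : (QuotientGroup.mk x : SuzukiA n θ ⧸ N) ^ (2 ^ 2) = 1 := by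
      show ((QuotientGroup.mk (x ^ 4) : SuzukiA n θ ⧸ N)) = 1
      rw [hx4]; rfl
    have hy2 : (QuotientGroup.mk x : SuzukiA n θ ⧸ N) ^ (2 ^ 1) ≠ 1 := by
      intro h
      have : x ^ 2 ∈ N := by
        rw [← QuotientGroup.eq_one_iff]
        exact h
      have : x ^ 2 ∈ {z : SuzukiA n θ | ∃ g, z = x⁻¹ * g⁻¹ * x * g} := by
        rw [← hN]; exact this
      exact hx2H (hsub this)
    have := orderOf_eq_prime_pow hy2 hy4
    rw [this]; norm_num
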